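/- In the parsing process of a sentence of length n where each word introduces at most m effects, the total number of combinator applications in a semantic parse tree is at most quadratic in n: specifically at most Σ_{i=1}^{n} ((2+c)·m·(i+1) + 1) ≤ (2+c)·m·(n+1)² + n, hence O(n²). -/
import Mathlib

/-- Quadratic bound on the size of semantic parse trees: summing the per-step
bound `(2+c)·m·(i+1)+1` over the `n` parsing steps gives at most
`(2+c)·m·(n+1)² + n`. -/
theorem stmt_8 (n m c : ℕ) :
    ∑ i ∈ Finset.Icc 1 n, ((2 + c) * m * (i + 1) + 1) ≤
      (2 + c) * m * (n + 1) ^ 2 + n := by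
  induction n with
  | zero => simp
  | succ k ih =>
    rw [Finset.sum_Icc_succ_top (by omega)]
    have h : (2 + c) * m * (k + 1 + 1) ^ 2 =
        (2 + c) * m * (k + 1) ^ 2 + (2 + c) * m * (k + 1 + 1) + (2 + c) * m * (k + 1) := by
      ring
    omega
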